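/- arXiv:2409.02833 — 4 statements merged into one kernel-verified Lean document; each statement's English description precedes it below -/
import Mathlib

section
/- Let ℓ ≥ 1 and let (ℓ, G, H, ⟨≺_H, σ_H⟩) be an instance of Stack Layout Extension with V(G) = V(H) (so only edges are missing). Let e ∈ E_add be a missing edge such that |S(e)| ≥ m_add, where S(e) is the set of pages p ∈ {1,…,ℓ} such that ⟨≺_H, σ_H ∪ {(e,p)}⟩ is an ℓ-page stack layout of the graph H together with the edge e. Then G admits an ℓ-page stack layout extending ⟨≺_H, σ_H⟩ if and only if the graph G − e (obtained from G by deleting e) admits an ℓ-page stack layout extending ⟨≺_H, σ_H⟩. -/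
/-- Two edges `e` and `f` alternate (cross) with respect to the vertex position
function `pos`: `e = {a, c}` and `f = {b, d}` with `pos a < pos b < pos c < pos d`. -/
def EdgesCross {V : Type*} (pos : V → ℕ) (e f : Sym2 V) : Prop :=
  ∃ a b c d : V, e = s(a, c) ∧ f = s(b, d) ∧ pos a < pos b ∧ pos b < pos c ∧ pos c < pos d

/-- `⟨pos, σ⟩` is an `ℓ`-page stack layout of the graph with vertex set `Vs` and
edge set `Es`: `pos` induces a linear order of `Vs` and no two edges assigned to a
common page alternate. -/
def IsStackLayout {V : Type*} (ℓ : ℕ) (Vs : Finset V) (Es : Finset (Sym2 V))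
    (pos : V → ℕ) (σ : Sym2 V → Fin ℓ) : Prop :=
  Set.InjOn pos ↑Vs ∧ ∀ e ∈ Es, ∀ f ∈ Es, σ e = σ f → ¬ EdgesCross pos e f

/-- `⟨posG, σG⟩` extends `⟨posH, σH⟩`: the linear order restricted to `VH` agrees with
the order induced by `posH`, and the page assignment restricted to `EH` equals `σH`. -/
def ExtendsLayout {V : Type*} {ℓ : ℕ} (VH : Finset V) (EH : Finset (Sym2 V))
    (posH : V → ℕ) (σH : Sym2 V → Fin ℓ) (posG : V → ℕ) (σG : Sym2 V → Fin ℓ) : Prop :=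
  (∀ u ∈ VH, ∀ v ∈ VH, (posH u < posH v ↔ posG u < posG v)) ∧ ∀ e ∈ EH, σG e = σH e

/-! Take an extension of `G - e`. Its vertex order agrees with `≺_H` on all of `V(G) = V(H)`, so on
each page of `S(e)` the edges of `H` still do not cross `e`. The added edges other than `e` are at
most `m_add - 1`, so they occupy fewer than `|S(e)|` pages, and `e` can be put on a page of `S(e)`
that carries none of them. -/

theorem edgesCross_irrefl {V : Type*} (pos : V → ℕ) (e : Sym2 V) : ¬ EdgesCross pos e e := by
  rintro ⟨a, b, c, d, rfl, hbd, hab, hbc, hcd⟩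
  rcases Sym2.eq_iff.mp hbd with ⟨rfl, rfl⟩ | ⟨rfl, rfl⟩ <;> omega

theorem EdgesCross.of_lt_iff {V : Type*} {Vs : Finset V} {pos pos' : V → ℕ}
    (h : ∀ u ∈ Vs, ∀ v ∈ Vs, pos u < pos v ↔ pos' u < pos' v) {e f : Sym2 V}
    (hcross : EdgesCross pos' e f) (he : ∀ x ∈ e, x ∈ Vs) (hf : ∀ x ∈ f, x ∈ Vs) :
    EdgesCross pos e f := by
  obtain ⟨a, b, c, d, rfl, rfl, hab, hbc, hcd⟩ := hcross
  have ha := he a (Sym2.mem_mk_left a c)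
  have hc := he c (Sym2.mem_mk_right a c)
  have hb := hf b (Sym2.mem_mk_left b d)
  have hd := hf d (Sym2.mem_mk_right b d)
  exact ⟨a, b, c, d, rfl, rfl, (h a ha b hb).mpr hab, (h b hb c hc).mpr hbc,
    (h c hc d hd).mpr hcd⟩

namespace IsStackLayout

variable {V : Type*} {ℓ : ℕ} {Vs : Finset V} {Es : Finset (Sym2 V)} {pos : V → ℕ}
  {σ : Sym2 V → Fin ℓ}

theorem mono {Es' : Finset (Sym2 V)} (h : IsStackLayout ℓ Vs Es pos σ) (hsub : Es' ⊆ Es) :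
    IsStackLayout ℓ Vs Es' pos σ :=
  ⟨h.1, fun f hf g hg => h.2 f (hsub hf) g (hsub hg)⟩

theorem update_of_erase [DecidableEq V] {e : Sym2 V} {p : Fin ℓ}
    (h : IsStackLayout ℓ Vs (Es.erase e) pos σ)
    (hp : ∀ f ∈ Es, f ≠ e → σ f = p → ¬ EdgesCross pos e f ∧ ¬ EdgesCross pos f e) :
    IsStackLayout ℓ Vs Es pos (Function.update σ e p) := by
  refine ⟨h.1, fun f hf g hg hpage => ?_⟩
  by_cases hfe : f = e <;> by_cases hge : g = e
  · subst hfe hge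
    exact edgesCross_irrefl pos _
  · subst hfe
    rw [Function.update_self, Function.update_of_ne hge] at hpage
    exact (hp g hg hge hpage.symm).1
  · subst hge
    rw [Function.update_self, Function.update_of_ne hfe] at hpage
    exact (hp f hf hfe hpage).2
  · rw [Function.update_of_ne hfe, Function.update_of_ne hge] at hpage
    exact h.2 f (Finset.mem_erase.2 ⟨hfe, hf⟩) g (Finset.mem_erase.2 ⟨hge, hg⟩) hpage

end IsStackLayout

theorem stmt0_general {V : Type*} [DecidableEq V] (ℓ : ℕ)
    (VH : Finset V) (EH EG : Finset (Sym2 V))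
    (hEG : ∀ e ∈ EG, ∀ x ∈ e, x ∈ VH)
    (posH : V → ℕ) (σH : Sym2 V → Fin ℓ)
    (e : Sym2 V) (heG : e ∈ EG) (heH : e ∉ EH)
    (hSe : (EG \ EH).card ≤
      Set.ncard {p : Fin ℓ | ∀ f ∈ EH, σH f = p →
        ¬ EdgesCross posH e f ∧ ¬ EdgesCross posH f e}) :
    (∃ posG σG, IsStackLayout ℓ VH EG posG σG ∧ ExtendsLayout VH EH posH σH posG σG) ↔
      ∃ posG σG, IsStackLayout ℓ VH (EG.erase e) posG σG ∧
        ExtendsLayout VH EH posH σH posG σG := by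
  refine ⟨fun ⟨posG, σG, hG, hext⟩ => ⟨posG, σG, hG.mono (Finset.erase_subset e EG), hext⟩, ?_⟩
  rintro ⟨posG, σG, hG, hpos, hσ⟩
  obtain ⟨p, hpH, hpAdd⟩ : ∃ p ∈ {p : Fin ℓ | ∀ f ∈ EH, σH f = p →
      ¬ EdgesCross posH e f ∧ ¬ EdgesCross posH f e}, p ∉ ((EG \ EH).erase e).image σG := by
    refine Set.exists_mem_notMem_of_ncard_lt_ncard ?_
    calc (↑(((EG \ EH).erase e).image σG) : Set (Fin ℓ)).ncard
        ≤ ((EG \ EH).erase e).card := by rw [Set.ncard_coe_finset]; exact Finset.card_image_le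
      _ < (EG \ EH).card := Finset.card_erase_lt_of_mem (Finset.mem_sdiff.2 ⟨heG, heH⟩)
      _ ≤ _ := hSe
  refine ⟨posG, Function.update σG e p, hG.update_of_erase fun f hf hfe hfp => ?_, hpos,
    fun f hf => ?_⟩
  · by_cases hfH : f ∈ EH
    · obtain ⟨hef, hfe'⟩ := hpH f hfH ((hσ f hfH).symm.trans hfp)
      exact ⟨fun hc => hef (hc.of_lt_iff hpos (hEG e heG) (hEG f hf)),
        fun hc => hfe' (hc.of_lt_iff hpos (hEG f hf) (hEG e heG))⟩
    · exact absurd (hfp ▸ Finset.mem_image_of_mem σG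
        (Finset.mem_erase.2 ⟨hfe, Finset.mem_sdiff.2 ⟨hf, hfH⟩⟩)) hpAdd
  · rw [Function.update_of_ne (ne_of_mem_of_not_mem hf heH)]
    exact hσ f hf

/-- If `V(G) = V(H)` (only edges are missing) and `e` is a missing
edge whose set `S(e)` of free pages has at least `m_add` elements, then `G` admits an
`ℓ`-page stack layout extending `⟨≺_H, σ_H⟩` iff `G − e` does. -/
theorem stmt0 {V : Type*} [DecidableEq V] (ℓ : ℕ) (hℓ : 1 ≤ ℓ)
    (VH : Finset V) (EH EG : Finset (Sym2 V)) (hEHG : EH ⊆ EG)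
    (hEG : ∀ e ∈ EG, ∀ x ∈ e, x ∈ VH) (hsimple : ∀ e ∈ EG, ¬ e.IsDiag)
    (posH : V → ℕ) (σH : Sym2 V → Fin ℓ)
    (hH : IsStackLayout ℓ VH EH posH σH)
    (e : Sym2 V) (heG : e ∈ EG) (heH : e ∉ EH)
    (hSe : (EG \ EH).card ≤
      Set.ncard {p : Fin ℓ | ∀ f ∈ EH, σH f = p →
        ¬ EdgesCross posH e f ∧ ¬ EdgesCross posH f e}) :
    (∃ posG σG, IsStackLayout ℓ VH EG posG σG ∧ ExtendsLayout VH EH posH σH posG σG) ↔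
      ∃ posG σG, IsStackLayout ℓ VH (EG.erase e) posG σG ∧
        ExtendsLayout VH EH posH σH posG σG :=
  stmt0_general ℓ VH EH EG hEG posH σH e heG heH hSe
end

section
/- Let (ℓ, G, H, ⟨≺_H, σ_H⟩) be an instance of Stack Layout Extension (in the per-page-edge-set model) that contains a fixation gadget on F > 1 new vertices f_1, …, f_F with distinguished page p_d. Then in every ℓ-page stack layout ⟨≺_G, σ_G⟩ of G extending ⟨≺_H, σ_H⟩, for every i ∈ {1,…,F} it holds that v_i ≺_G f_i ≺_G v_{i+1}, and both edges f_i v_i and f_i v_{i+1} are assigned to page p_d. Moreover, the fixation gadget contributes exactly 4F + 3 vertices and exactly (ℓ + 4)F + ℓ + 2 edges (counting each host pair once per page it is assigned to, and including the 2F new edges) to the instance. -/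
lemma edgesCross_of {V : Type*} (pos : V → ℕ) {e f : Sym2 V} (p q r s : V)
    (he : e = s(p, r)) (hf : f = s(q, s)) (h1 : pos p < pos q) (h2 : pos q < pos r)
    (h3 : pos r < pos s) : EdgesCross pos e f :=
  ⟨p, q, r, s, he, hf, h1, h2, h3⟩

lemma disjoint_image_of {α β W : Type*} [Fintype α] [Fintype β] [DecidableEq W]
    (f : α → W) (g : β → W) (h : ∀ j k, f j ≠ g k) :
    Disjoint (Finset.univ.image f) (Finset.univ.image g) := by
  rw [Finset.disjoint_left]
  intro y hy hz
  obtain ⟨j, -, rfl⟩ := Finset.mem_image.mp hy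
  obtain ⟨k, -, hk⟩ := Finset.mem_image.mp hz
  exact h j k hk.symm

/-- Fixation gadget (per-page-edge-set model): in every `ℓ`-page stack
layout of `G` extending the host layout, each new vertex `fv i` lies between `v i` and
`v (i+1)` and its two gadget edges are assigned to the distinguished page `p_d`;
moreover the gadget contributes exactly `4F + 3` vertices and `(ℓ + 4)F + ℓ + 2` edges
(counting each host pair once per page it is assigned to, plus the `2F` new edges). -/
theorem stmt2 {V : Type*} (ℓ F : ℕ) (hF : 1 < F)
    (VH VG : Set V) (hVHG : VH ⊆ VG)
    (PH : Fin ℓ → Set (Sym2 V)) (posH : V → ℕ)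
    (hposH : Set.InjOn posH VH)
    (hHvalid : ∀ p, ∀ e ∈ PH p, ∀ f ∈ PH p, ¬ EdgesCross posH e f)
    (hPHsub : ∀ p, ∀ e ∈ PH p, ∀ x ∈ e, x ∈ VH)
    (pd : Fin ℓ)
    (b v a : Fin (F + 1) → V) (fv : Fin F → V)
    (hbVH : ∀ i, b i ∈ VH) (hvVH : ∀ i, v i ∈ VH) (haVH : ∀ i, a i ∈ VH)
    (hfVG : ∀ i, fv i ∈ VG) (hfVH : ∀ i, fv i ∉ VH) (hfinj : Function.Injective fv)
    (hord₁ : ∀ i, posH (b i) < posH (v i))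
    (hord₂ : ∀ i, posH (v i) < posH (a i))
    (hord₃ : ∀ i : Fin F, posH (a i.castSucc) < posH (b i.succ))
    (hpage₁ : ∀ p, p ≠ pd → ∀ i, s(b i, a i) ∈ PH p)
    (hpage₂ : ∀ i, s(b i, v i) ∈ PH pd)
    (hpage₃ : ∀ i, s(v i, a i) ∈ PH pd)
    (hpage₄ : ∀ i : Fin F, s(v i.castSucc, v i.succ) ∈ PH pd)
    (hpage₅ : s(b 0, a (Fin.last F)) ∈ PH pd)
    (ENew : Set (Sym2 V))
    (hENsub : ∀ e ∈ ENew, ∀ x ∈ e, x ∈ VG)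
    (hnew₁ : ∀ i : Fin F, s(fv i, v i.castSucc) ∈ ENew)
    (hnew₂ : ∀ i : Fin F, s(fv i, v i.succ) ∈ ENew) :
    (∀ (posG : V → ℕ) (σ : Sym2 V → Fin ℓ),
      Set.InjOn posG VG →
      (∀ x ∈ VH, ∀ y ∈ VH, (posH x < posH y ↔ posG x < posG y)) →
      (∀ p, ∀ e f, (e ∈ PH p ∨ e ∈ ENew ∧ σ e = p) → (f ∈ PH p ∨ f ∈ ENew ∧ σ f = p) →
        ¬ EdgesCross posG e f) →
      ∀ i : Fin F,
        posG (v i.castSucc) < posG (fv i) ∧ posG (fv i) < posG (v i.succ) ∧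
        σ s(fv i, v i.castSucc) = pd ∧ σ s(fv i, v i.succ) = pd) ∧
    Set.ncard {x : V | (∃ i, x = b i ∨ x = v i ∨ x = a i) ∨ ∃ i, x = fv i} = 4 * F + 3 ∧
    Set.ncard {pe : Fin ℓ × Sym2 V |
        (pe.1 ≠ pd ∧ ∃ i, pe.2 = s(b i, a i)) ∨
        (pe.1 = pd ∧ ((∃ i, pe.2 = s(b i, v i) ∨ pe.2 = s(v i, a i)) ∨
          (∃ i : Fin F, pe.2 = s(v i.castSucc, v i.succ)) ∨
          pe.2 = s(b 0, a (Fin.last F))))} +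
      Set.ncard {e : Sym2 V | ∃ i : Fin F,
        e = s(fv i, v i.castSucc) ∨ e = s(fv i, v i.succ)} =
      (ℓ + 4) * F + ℓ + 2 := by
  classical
  -- strict monotonicity of the gadget vertex positions in the host order
  have hBmono : StrictMono fun j : Fin (F + 1) => posH (b j) := by
    rw [Fin.strictMono_iff_lt_succ]
    intro i
    exact lt_trans (lt_trans (hord₁ i.castSucc) (hord₂ i.castSucc)) (hord₃ i)
  have hVmono : StrictMono fun j : Fin (F + 1) => posH (v j) := by
    rw [Fin.strictMono_iff_lt_succ]
    intro i
    exact lt_trans (hord₂ i.castSucc) (lt_trans (hord₃ i) (hord₁ i.succ))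
  have hAmono : StrictMono fun j : Fin (F + 1) => posH (a j) := by
    rw [Fin.strictMono_iff_lt_succ]
    intro i
    exact lt_trans (hord₃ i) (lt_trans (hord₁ i.succ) (hord₂ i.succ))
  have hAB : ∀ j k : Fin (F + 1), j < k → posH (a j) < posH (b k) := by
    intro j k hjk
    have hjk' : (j : ℕ) < (k : ℕ) := hjk
    have hj : (j : ℕ) < F := by have := k.isLt; omega
    have hcast : Fin.castSucc (⟨(j : ℕ), hj⟩ : Fin F) = j := by ext; simp
    have hle : Fin.succ (⟨(j : ℕ), hj⟩ : Fin F) ≤ k := by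
      rw [Fin.le_def, Fin.val_succ]; exact hjk'
    calc posH (a j) = posH (a (Fin.castSucc ⟨(j : ℕ), hj⟩)) := by rw [hcast]
      _ < posH (b (Fin.succ ⟨(j : ℕ), hj⟩)) := hord₃ _
      _ ≤ posH (b k) := hBmono.monotone hle
  have hBV : ∀ j k : Fin (F + 1), j ≤ k → posH (b j) < posH (v k) :=
    fun j k h => lt_of_le_of_lt (hBmono.monotone h) (hord₁ k)
  have hVA : ∀ j k : Fin (F + 1), j ≤ k → posH (v j) < posH (a k) :=
    fun j k h => lt_of_lt_of_le (hord₂ j) (hAmono.monotone h)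
  have hVB : ∀ j k : Fin (F + 1), j < k → posH (v j) < posH (b k) :=
    fun j k h => (hord₂ j).trans (hAB j k h)
  have hAV : ∀ j k : Fin (F + 1), j < k → posH (a j) < posH (v k) :=
    fun j k h => (hAB j k h).trans (hord₁ k)
  have hBA : ∀ j k : Fin (F + 1), j ≤ k → posH (b j) < posH (a k) :=
    fun j k h => (hBV j k h).trans (hord₂ k)
  -- distinctness of gadget vertices
  have hbinj : Function.Injective b := fun j k h => hBmono.injective (congrArg posH h)
  have hvinj : Function.Injective v := fun j k h => hVmono.injective (congrArg posH h)
  have hainj : Function.Injective a := fun j k h => hAmono.injective (congrArg posH h)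
  have hbv : ∀ j k, b j ≠ v k := by
    intro j k h
    have h2 : posH (b j) = posH (v k) := congrArg posH h
    rcases le_or_gt j k with h3 | h3
    · exact absurd h2 (hBV j k h3).ne
    · exact absurd h2.symm (hVB k j h3).ne
  have hba : ∀ j k, b j ≠ a k := by
    intro j k h
    have h2 : posH (b j) = posH (a k) := congrArg posH h
    rcases le_or_gt j k with h3 | h3
    · exact absurd h2 (hBA j k h3).ne
    · exact absurd h2.symm (hAB k j h3).ne
  have hva : ∀ j k, v j ≠ a k := by
    intro j k h
    have h2 : posH (v j) = posH (a k) := congrArg posH h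
    rcases le_or_gt j k with h3 | h3
    · exact absurd h2 (hVA j k h3).ne
    · exact absurd h2.symm (hAV k j h3).ne
  have hfb : ∀ (j : Fin F) k, fv j ≠ b k := by
    intro j k h; exact hfVH j (by rw [h]; exact hbVH k)
  have hfv' : ∀ (j : Fin F) k, fv j ≠ v k := by
    intro j k h; exact hfVH j (by rw [h]; exact hvVH k)
  have hfa : ∀ (j : Fin F) k, fv j ≠ a k := by
    intro j k h; exact hfVH j (by rw [h]; exact haVH k)
  refine ⟨?_, ?_, ?_⟩
  · -- Part 1: layout extension forces position and page of each fv i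
    intro posG σ hinj hiff hnc i
    have tr : ∀ x ∈ VH, ∀ y ∈ VH, posH x < posH y → posG x < posG y :=
      fun x hx y hy h => (hiff x hx y hy).mp h
    have gBV : ∀ j k, j ≤ k → posG (b j) < posG (v k) :=
      fun j k h => tr _ (hbVH j) _ (hvVH k) (hBV j k h)
    have gVA : ∀ j k, j ≤ k → posG (v j) < posG (a k) :=
      fun j k h => tr _ (hvVH j) _ (haVH k) (hVA j k h)
    have gVB : ∀ j k, j < k → posG (v j) < posG (b k) :=
      fun j k h => tr _ (hvVH j) _ (hbVH k) (hVB j k h)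
    have gAV : ∀ j k, j < k → posG (a j) < posG (v k) :=
      fun j k h => tr _ (haVH j) _ (hvVH k) (hAV j k h)
    have gAB : ∀ j k, j < k → posG (a j) < posG (b k) :=
      fun j k h => tr _ (haVH j) _ (hbVH k) (hAB j k h)
    have gVV : ∀ j k, j < k → posG (v j) < posG (v k) :=
      fun j k h => tr _ (hvVH j) _ (hvVH k) (hVmono h)
    have gbv : ∀ j, posG (b j) < posG (v j) := fun j => gBV j j le_rfl
    have gva : ∀ j, posG (v j) < posG (a j) := fun j => gVA j j le_rfl
    have hne : ∀ u ∈ VH, posG (fv i) ≠ posG u := by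
      intro u hu h
      exact hfVH i (by rw [hinj (hfVG i) (hVHG hu) h]; exact hu)
    have htric : ∀ u ∈ VH, posG (fv i) < posG u ∨ posG u < posG (fv i) :=
      fun u hu => lt_or_gt_of_ne (hne u hu)
    have SL1 : ∀ (j : Fin (F + 1)) (p : Fin ℓ), p ≠ pd → s(fv i, v j) ∈ ENew →
        σ s(fv i, v j) = p → posG (b j) < posG (fv i) ∧ posG (fv i) < posG (a j) := by
      intro j p hp hmem hσ
      have hba' := hpage₁ p hp j
      constructor
      · rcases htric (b j) (hbVH j) with h | h
        · exact absurd (edgesCross_of posG (fv i) (b j) (v j) (a j) rfl rfl h (gbv j) (gva j))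
            (hnc p _ _ (Or.inr ⟨hmem, hσ⟩) (Or.inl hba'))
        · exact h
      · rcases htric (a j) (haVH j) with h | h
        · exact h
        · exact absurd (edgesCross_of posG (b j) (v j) (a j) (fv i) rfl Sym2.eq_swap
            (gbv j) (gva j) h)
            (hnc p _ _ (Or.inl hba') (Or.inr ⟨hmem, hσ⟩))
    have hA : σ s(fv i, v i.castSucc) = pd := by
      by_contra hA1
      obtain ⟨hb1, ha1⟩ := SL1 i.castSucc _ hA1 (hnew₁ i) rfl
      by_cases hA2 : σ s(fv i, v i.succ) = pd
      · rcases htric (v i.castSucc) (hvVH _) with h | h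
        · exact (hnc pd _ _ (Or.inl (hpage₂ i.castSucc)) (Or.inr ⟨hnew₂ i, hA2⟩))
            (edgesCross_of posG (b i.castSucc) (fv i) (v i.castSucc) (v i.succ) rfl rfl hb1 h
              (gVV _ _ (Fin.castSucc_lt_succ (i := i))))
        · exact (hnc pd _ _ (Or.inl (hpage₃ i.castSucc)) (Or.inr ⟨hnew₂ i, hA2⟩))
            (edgesCross_of posG (v i.castSucc) (fv i) (a i.castSucc) (v i.succ) rfl rfl h ha1
              (gAV _ _ (Fin.castSucc_lt_succ (i := i))))
      · obtain ⟨hb2, ha2⟩ := SL1 i.succ _ hA2 (hnew₂ i) rfl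
        exact lt_asymm hb2 (ha1.trans (gAB _ _ (Fin.castSucc_lt_succ (i := i))))
    have hA' : σ s(fv i, v i.succ) = pd := by
      by_contra hA1
      obtain ⟨hb2, ha2⟩ := SL1 i.succ _ hA1 (hnew₂ i) rfl
      rcases htric (v i.succ) (hvVH _) with h | h
      · exact (hnc pd _ _ (Or.inr ⟨hnew₁ i, hA⟩) (Or.inl (hpage₂ i.succ)))
          (edgesCross_of posG (v i.castSucc) (b i.succ) (fv i) (v i.succ) Sym2.eq_swap rfl
            (gVB _ _ (Fin.castSucc_lt_succ (i := i))) hb2 h)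
      · exact (hnc pd _ _ (Or.inr ⟨hnew₁ i, hA⟩) (Or.inl (hpage₃ i.succ)))
          (edgesCross_of posG (v i.castSucc) (v i.succ) (fv i) (a i.succ) Sym2.eq_swap rfl
            (gVV _ _ (Fin.castSucc_lt_succ (i := i))) h ha2)
    have hB0 : posG (b 0) < posG (fv i) := by
      rcases htric (b 0) (hbVH 0) with h | h
      · exact absurd (edgesCross_of posG (fv i) (b 0) (v i.castSucc) (a (Fin.last F)) rfl rfl h
          (gBV 0 i.castSucc (Fin.zero_le _)) (gVA i.castSucc (Fin.last F) (Fin.le_last _)))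
          (hnc pd _ _ (Or.inr ⟨hnew₁ i, hA⟩) (Or.inl hpage₅))
      · exact h
    have hBL : posG (fv i) < posG (a (Fin.last F)) := by
      rcases htric (a (Fin.last F)) (haVH _) with h | h
      · exact h
      · exact absurd (edgesCross_of posG (b 0) (v i.castSucc) (a (Fin.last F)) (fv i) rfl
          Sym2.eq_swap (gBV 0 _ (Fin.zero_le _)) (gVA _ _ (Fin.le_last _)) h)
          (hnc pd _ _ (Or.inl hpage₅) (Or.inr ⟨hnew₁ i, hA⟩))
    have low : ∀ j : Fin (F + 1), j ≤ i.castSucc → posG (v j) < posG (fv i) := by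
      intro j
      induction j using Fin.induction with
      | zero =>
        intro _
        rcases htric (v 0) (hvVH 0) with h | h
        · exact absurd (edgesCross_of posG (b 0) (fv i) (v 0) (v i.succ) rfl rfl hB0 h
            (gVV 0 i.succ (Fin.succ_pos i)))
            (hnc pd _ _ (Or.inl (hpage₂ 0)) (Or.inr ⟨hnew₂ i, hA'⟩))
        · exact h
      | succ j ih =>
        intro hji
        have h1 : posG (v j.castSucc) < posG (fv i) :=
          ih (le_trans (Fin.castSucc_lt_succ (i := j)).le hji)
        rcases htric (v j.succ) (hvVH _) with h | h
        · exact absurd (edgesCross_of posG (v j.castSucc) (fv i) (v j.succ) (v i.succ) rfl rfl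
            h1 h (gVV _ _ (lt_of_le_of_lt hji (Fin.castSucc_lt_succ (i := i)))))
            (hnc pd _ _ (Or.inl (hpage₄ j)) (Or.inr ⟨hnew₂ i, hA'⟩))
        · exact h
    have high : ∀ j : Fin (F + 1), i.succ ≤ j → posG (fv i) < posG (v j) := by
      intro j
      induction j using Fin.reverseInduction with
      | last =>
        intro _
        rcases htric (v (Fin.last F)) (hvVH _) with h | h
        · exact h
        · exact absurd (edgesCross_of posG (v i.castSucc) (v (Fin.last F)) (fv i)
            (a (Fin.last F)) Sym2.eq_swap rfl (gVV _ _ (Fin.castSucc_lt_last i)) h hBL)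
            (hnc pd _ _ (Or.inr ⟨hnew₁ i, hA⟩) (Or.inl (hpage₃ (Fin.last F))))
      | cast j ih =>
        intro hij
        have h1 : posG (fv i) < posG (v j.succ) :=
          ih (le_trans hij (Fin.castSucc_lt_succ (i := j)).le)
        rcases htric (v j.castSucc) (hvVH _) with h | h
        · exact h
        · exact absurd (edgesCross_of posG (v i.castSucc) (v j.castSucc) (fv i) (v j.succ)
            Sym2.eq_swap rfl (gVV _ _ (lt_of_lt_of_le (Fin.castSucc_lt_succ (i := i)) hij)) h h1)
            (hnc pd _ _ (Or.inr ⟨hnew₁ i, hA⟩) (Or.inl (hpage₄ j)))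
    exact ⟨low i.castSucc le_rfl, high i.succ le_rfl, hA, hA'⟩
  · -- Part 2: vertex count
    have hset : {x : V | (∃ i, x = b i ∨ x = v i ∨ x = a i) ∨ ∃ i, x = fv i} =
        ↑(((Finset.univ.image b ∪ Finset.univ.image v) ∪ Finset.univ.image a)
          ∪ Finset.univ.image fv) := by
      ext y
      simp only [Set.mem_setOf_eq, Finset.coe_union, Set.mem_union, Finset.mem_coe,
        Finset.mem_image, Finset.mem_univ, true_and]
      constructor
      · rintro (⟨i, h | h | h⟩ | ⟨i, h⟩)
        exacts [Or.inl (Or.inl (Or.inl ⟨i, h.symm⟩)), Or.inl (Or.inl (Or.inr ⟨i, h.symm⟩)),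
          Or.inl (Or.inr ⟨i, h.symm⟩), Or.inr ⟨i, h.symm⟩]
      · rintro (((⟨i, h⟩ | ⟨i, h⟩) | ⟨i, h⟩) | ⟨i, h⟩)
        exacts [Or.inl ⟨i, Or.inl h.symm⟩, Or.inl ⟨i, Or.inr (Or.inl h.symm)⟩,
          Or.inl ⟨i, Or.inr (Or.inr h.symm)⟩, Or.inr ⟨i, h.symm⟩]
    rw [hset, Set.ncard_coe_finset]
    have d1 : Disjoint (Finset.univ.image b) (Finset.univ.image v) :=
      disjoint_image_of _ _ hbv
    have d2 : Disjoint (Finset.univ.image b ∪ Finset.univ.image v) (Finset.univ.image a) :=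
      Finset.disjoint_union_left.mpr ⟨disjoint_image_of _ _ hba, disjoint_image_of _ _ hva⟩
    have d3 : Disjoint ((Finset.univ.image b ∪ Finset.univ.image v) ∪ Finset.univ.image a)
        (Finset.univ.image fv) :=
      Finset.disjoint_union_left.mpr ⟨Finset.disjoint_union_left.mpr
        ⟨disjoint_image_of _ _ (fun j k => (hfb k j).symm),
         disjoint_image_of _ _ (fun j k => (hfv' k j).symm)⟩,
        disjoint_image_of _ _ (fun j k => (hfa k j).symm)⟩
    rw [Finset.card_union_of_disjoint d3, Finset.card_union_of_disjoint d2,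
      Finset.card_union_of_disjoint d1, Finset.card_image_of_injective _ hbinj,
      Finset.card_image_of_injective _ hvinj, Finset.card_image_of_injective _ hainj,
      Finset.card_image_of_injective _ hfinj]
    simp only [Finset.card_univ, Fintype.card_fin]
    omega
  · -- Part 3: edge count
    have hl : 1 ≤ ℓ := pd.pos
    have iba : Function.Injective fun j : Fin (F + 1) => s(b j, a j) := by
      intro j k h
      rcases Sym2.eq_iff.mp h with ⟨h1, -⟩ | ⟨h1, -⟩
      · exact hbinj h1
      · exact absurd h1 (hba j k)
    have ibv : Function.Injective fun j : Fin (F + 1) => s(b j, v j) := by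
      intro j k h
      rcases Sym2.eq_iff.mp h with ⟨h1, -⟩ | ⟨h1, -⟩
      · exact hbinj h1
      · exact absurd h1 (hbv j k)
    have iva : Function.Injective fun j : Fin (F + 1) => s(v j, a j) := by
      intro j k h
      rcases Sym2.eq_iff.mp h with ⟨h1, -⟩ | ⟨h1, -⟩
      · exact hvinj h1
      · exact absurd h1 (hva j k)
    have ivv : Function.Injective fun j : Fin F => s(v j.castSucc, v j.succ) := by
      intro j k h
      rcases Sym2.eq_iff.mp h with ⟨h1, -⟩ | ⟨h1, h2⟩
      · exact Fin.castSucc_injective F (hvinj h1)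
      · exfalso
        have h3 := congrArg Fin.val (hvinj h1)
        have h4 := congrArg Fin.val (hvinj h2)
        simp only [Fin.coe_castSucc, Fin.val_succ] at h3 h4
        omega
    have ifc : Function.Injective fun j : Fin F => s(fv j, v j.castSucc) := by
      intro j k h
      rcases Sym2.eq_iff.mp h with ⟨h1, -⟩ | ⟨h1, -⟩
      · exact hfinj h1
      · exact absurd h1 (hfv' j k.castSucc)
    have ifs : Function.Injective fun j : Fin F => s(fv j, v j.succ) := by
      intro j k h
      rcases Sym2.eq_iff.mp h with ⟨h1, -⟩ | ⟨h1, -⟩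
      · exact hfinj h1
      · exact absurd h1 (hfv' j k.succ)
    set EA : Finset (Sym2 V) := Finset.univ.image fun j : Fin (F + 1) => s(b j, a j) with hEA
    set EP : Finset (Sym2 V) :=
      (((Finset.univ.image fun j : Fin (F + 1) => s(b j, v j)) ∪
        (Finset.univ.image fun j : Fin (F + 1) => s(v j, a j))) ∪
       (Finset.univ.image fun j : Fin F => s(v j.castSucc, v j.succ))) ∪
      {s(b 0, a (Fin.last F))} with hEP
    have hset1 : {pe : Fin ℓ × Sym2 V |
        (pe.1 ≠ pd ∧ ∃ i, pe.2 = s(b i, a i)) ∨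
        (pe.1 = pd ∧ ((∃ i, pe.2 = s(b i, v i) ∨ pe.2 = s(v i, a i)) ∨
          (∃ i : Fin F, pe.2 = s(v i.castSucc, v i.succ)) ∨
          pe.2 = s(b 0, a (Fin.last F))))} =
        ↑(((Finset.univ.erase pd) ×ˢ EA) ∪ ({pd} ×ˢ EP)) := by
      ext ⟨p, e⟩
      simp only [Set.mem_setOf_eq, Finset.coe_union, Set.mem_union, Finset.mem_coe,
        Finset.mem_product, Finset.mem_erase, Finset.mem_univ, and_true, true_and,
        Finset.mem_union, Finset.mem_image, Finset.mem_singleton, hEA, hEP]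
      constructor
      · rintro (⟨h1, i, h2⟩ | ⟨h1, (⟨i, h2 | h2⟩ | ⟨i, h2⟩ | h2)⟩)
        exacts [Or.inl ⟨h1, ⟨i, h2.symm⟩⟩,
          Or.inr ⟨h1, Or.inl (Or.inl (Or.inl ⟨i, h2.symm⟩))⟩,
          Or.inr ⟨h1, Or.inl (Or.inl (Or.inr ⟨i, h2.symm⟩))⟩,
          Or.inr ⟨h1, Or.inl (Or.inr ⟨i, h2.symm⟩)⟩,
          Or.inr ⟨h1, Or.inr h2⟩]
      · rintro (⟨h1, ⟨i, h2⟩⟩ | ⟨h1, (((⟨i, h2⟩ | ⟨i, h2⟩) | ⟨i, h2⟩) | h2)⟩)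
        exacts [Or.inl ⟨h1, ⟨i, h2.symm⟩⟩,
          Or.inr ⟨h1, Or.inl ⟨i, Or.inl h2.symm⟩⟩,
          Or.inr ⟨h1, Or.inl ⟨i, Or.inr h2.symm⟩⟩,
          Or.inr ⟨h1, Or.inr (Or.inl ⟨i, h2.symm⟩)⟩,
          Or.inr ⟨h1, Or.inr (Or.inr h2)⟩]
    set N1 : Finset (Sym2 V) := Finset.univ.image fun j : Fin F => s(fv j, v j.castSucc)
      with hN1
    set N2 : Finset (Sym2 V) := Finset.univ.image fun j : Fin F => s(fv j, v j.succ) with hN2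
    have hset2 : {e : Sym2 V | ∃ i : Fin F,
        e = s(fv i, v i.castSucc) ∨ e = s(fv i, v i.succ)} = ↑(N1 ∪ N2) := by
      ext e
      simp only [Set.mem_setOf_eq, Finset.coe_union, Set.mem_union, Finset.mem_coe,
        Finset.mem_image, Finset.mem_univ, true_and, hN1, hN2]
      constructor
      · rintro ⟨i, h | h⟩
        exacts [Or.inl ⟨i, h.symm⟩, Or.inr ⟨i, h.symm⟩]
      · rintro (⟨i, h⟩ | ⟨i, h⟩)
        exacts [⟨i, Or.inl h.symm⟩, ⟨i, Or.inr h.symm⟩]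
    -- cardinalities
    have cEA : EA.card = F + 1 := by
      rw [hEA, Finset.card_image_of_injective _ iba, Finset.card_univ, Fintype.card_fin]
    have d12 : Disjoint (Finset.univ.image fun j : Fin (F + 1) => s(b j, v j))
        (Finset.univ.image fun j : Fin (F + 1) => s(v j, a j)) := by
      refine disjoint_image_of _ _ ?_
      intro j k h
      rcases Sym2.eq_iff.mp h with ⟨h1, -⟩ | ⟨h1, -⟩
      · exact hbv j k h1
      · exact hba j k h1
    have d23 : Disjoint ((Finset.univ.image fun j : Fin (F + 1) => s(b j, v j)) ∪
        (Finset.univ.image fun j : Fin (F + 1) => s(v j, a j)))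
        (Finset.univ.image fun j : Fin F => s(v j.castSucc, v j.succ)) := by
      refine Finset.disjoint_union_left.mpr ⟨?_, ?_⟩ <;> refine disjoint_image_of _ _ ?_ <;>
        intro j k h
      · rcases Sym2.eq_iff.mp h with ⟨h1, -⟩ | ⟨h1, -⟩
        · exact hbv j k.castSucc h1
        · exact hbv j k.succ h1
      · rcases Sym2.eq_iff.mp h with ⟨-, h2⟩ | ⟨-, h2⟩
        · exact hva k.succ j h2.symm
        · exact hva k.castSucc j h2.symm
    have dsing : Disjoint ((((Finset.univ.image fun j : Fin (F + 1) => s(b j, v j)) ∪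
        (Finset.univ.image fun j : Fin (F + 1) => s(v j, a j))) ∪
        (Finset.univ.image fun j : Fin F => s(v j.castSucc, v j.succ))))
        ({s(b 0, a (Fin.last F))} : Finset (Sym2 V)) := by
      rw [Finset.disjoint_right]
      intro x hx1 hx
      rw [Finset.mem_singleton] at hx1
      subst hx1
      simp only [Finset.mem_union, Finset.mem_image, Finset.mem_univ, true_and] at hx
      rcases hx with (⟨i, h⟩ | ⟨i, h⟩) | ⟨i, h⟩
      · rcases Sym2.eq_iff.mp h with ⟨-, h2⟩ | ⟨h1, -⟩
        · exact hva i (Fin.last F) h2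
        · exact hba i (Fin.last F) h1
      · rcases Sym2.eq_iff.mp h with ⟨h1, -⟩ | ⟨h1, -⟩
        · exact hbv 0 i h1.symm
        · exact hva i (Fin.last F) h1
      · rcases Sym2.eq_iff.mp h with ⟨h1, -⟩ | ⟨h1, -⟩
        · exact hbv 0 i.castSucc h1.symm
        · exact hva i.castSucc (Fin.last F) h1
    have cEP : EP.card = 3 * F + 3 := by
      rw [hEP, Finset.card_union_of_disjoint dsing, Finset.card_union_of_disjoint d23,
        Finset.card_union_of_disjoint d12, Finset.card_image_of_injective _ ibv,
        Finset.card_image_of_injective _ iva, Finset.card_image_of_injective _ ivv,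
        Finset.card_singleton]
      simp only [Finset.card_univ, Fintype.card_fin]
      omega
    have dS1 : Disjoint ((Finset.univ.erase pd) ×ˢ EA) ({pd} ×ˢ EP) := by
      rw [Finset.disjoint_left]
      rintro ⟨p, e⟩ h1 h2
      rw [Finset.mem_product] at h1 h2
      exact (Finset.mem_erase.mp h1.1).1 (Finset.mem_singleton.mp h2.1)
    have dN : Disjoint N1 N2 := by
      rw [hN1, hN2]
      refine disjoint_image_of _ _ ?_
      intro j k h
      rcases Sym2.eq_iff.mp h with ⟨h1, h2⟩ | ⟨h1, -⟩
      · obtain rfl := hfinj h1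
        have h3 := congrArg Fin.val (hvinj h2)
        simp only [Fin.coe_castSucc, Fin.val_succ] at h3
        omega
      · exact hfv' j k.succ h1
    have cS1 : (((Finset.univ.erase pd) ×ˢ EA) ∪ ({pd} ×ˢ EP)).card =
        (ℓ - 1) * (F + 1) + (3 * F + 3) := by
      rw [Finset.card_union_of_disjoint dS1, Finset.card_product, Finset.card_product,
        Finset.card_erase_of_mem (Finset.mem_univ pd), Finset.card_singleton, cEA, cEP,
        Finset.card_univ, Fintype.card_fin, one_mul]
    have cS2 : (N1 ∪ N2).card = 2 * F := by
      rw [Finset.card_union_of_disjoint dN, hN1, hN2,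
        Finset.card_image_of_injective _ ifc, Finset.card_image_of_injective _ ifs]
      simp only [Finset.card_univ, Fintype.card_fin]
      omega
    rw [hset1, hset2, Set.ncard_coe_finset, Set.ncard_coe_finset, cS1, cS2]
    obtain ⟨m, rfl⟩ : ∃ m, ℓ = m + 1 := ⟨ℓ - 1, by omega⟩
    have hm : m + 1 - 1 = m := rfl
    rw [hm]
    ring
end

section
/- Let (ℓ, G, H, ⟨≺_H, σ_H⟩) be an instance of Stack Layout Extension where G and H are simple graphs and which contains an adapted (multi-edge-free) fixation gadget on F > 1 new vertices f_1, …, f_F with distinguished page p_d. Then in every ℓ-page stack layout ⟨≺_G, σ_G⟩ of G extending ⟨≺_H, σ_H⟩, for every i ∈ {1,…,F} it holds that v_i ≺_G f_i ≺_G v_{i+1}, and σ_G(f_i v_i) = σ_G(f_i v_{i+1}) = p_d. Moreover, the adapted fixation gadget contributes exactly 2Fℓ + 2ℓ − 1 vertices and exactly (ℓ + 4)F + ℓ + 2 edges to the instance. -/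
/-- Adapted (multi-edge-free) fixation gadget on `F > 1` new vertices
in the simple-graph model (pages are `Fin (m+1)` with `ℓ = m + 1`, the pages other than
`p_d` being labelled by an injection `q : Fin m → Fin (m+1)`, and `tL` denoting the
outermost label `ℓ - 1`): every extension places `ff i` between `vv i` and `vv (i+1)`
with both incident gadget edges on page `p_d`; moreover the gadget contributes exactly
`2Fℓ + 2ℓ − 1` vertices and `(ℓ + 4)F + ℓ + 2` edges. -/
theorem stmt3 {V : Type*} (m F : ℕ) (hm : 1 ≤ m) (hF : 1 < F)
    (VH VG : Finset V) (hVHG : VH ⊆ VG)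
    (EH EG : Finset (Sym2 V)) (hEHG : EH ⊆ EG)
    (hEHV : ∀ e ∈ EH, ∀ x ∈ e, x ∈ VH) (hEGV : ∀ e ∈ EG, ∀ x ∈ e, x ∈ VG)
    (posH : V → ℕ) (σH : Sym2 V → Fin (m + 1))
    (hH : IsStackLayout (m + 1) VH EH posH σH)
    (pd : Fin (m + 1)) (q : Fin m → Fin (m + 1))
    (hq : Function.Injective q) (hqpd : ∀ t, q t ≠ pd)
    (vv : Fin (F + 1) → V) (bb aa : Fin (F + 1) → Fin m → V) (ff : Fin F → V)
    (tL : Fin m) (htL : (tL : ℕ) = m - 1)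
    (hvVH : ∀ i, vv i ∈ VH) (hbVH : ∀ i t, bb i t ∈ VH) (haVH : ∀ i t, aa i t ∈ VH)
    (hfVG : ∀ i, ff i ∈ VG) (hfVH : ∀ i, ff i ∉ VH) (hfinj : Function.Injective ff)
    (hord₁ : ∀ i, ∀ t t' : Fin m, t < t' → posH (bb i t') < posH (bb i t))
    (hord₂ : ∀ i, ∀ t t' : Fin m, t < t' → posH (aa i t) < posH (aa i t'))
    (hord₃ : ∀ i t, posH (bb i t) < posH (vv i))
    (hord₄ : ∀ i t, posH (vv i) < posH (aa i t))
    (hord₅ : ∀ i : Fin F, posH (aa i.castSucc tL) < posH (bb i.succ tL))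
    (hedge₁ : ∀ i t, s(bb i t, aa i t) ∈ EH ∧ σH s(bb i t, aa i t) = q t)
    (hedge₂ : ∀ i, s(bb i tL, vv i) ∈ EH ∧ σH s(bb i tL, vv i) = pd)
    (hedge₃ : ∀ i, s(vv i, aa i tL) ∈ EH ∧ σH s(vv i, aa i tL) = pd)
    (hedge₄ : ∀ i : Fin F, s(vv i.castSucc, vv i.succ) ∈ EH ∧
      σH s(vv i.castSucc, vv i.succ) = pd)
    (hedge₅ : s(bb 0 tL, aa (Fin.last F) tL) ∈ EH ∧
      σH s(bb 0 tL, aa (Fin.last F) tL) = pd)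
    (hnew₁ : ∀ i : Fin F, s(ff i, vv i.castSucc) ∈ EG ∧ s(ff i, vv i.castSucc) ∉ EH)
    (hnew₂ : ∀ i : Fin F, s(ff i, vv i.succ) ∈ EG ∧ s(ff i, vv i.succ) ∉ EH) :
    (∀ (posG : V → ℕ) (σG : Sym2 V → Fin (m + 1)),
      IsStackLayout (m + 1) VG EG posG σG →
      ExtendsLayout VH EH posH σH posG σG →
      ∀ i : Fin F,
        posG (vv i.castSucc) < posG (ff i) ∧ posG (ff i) < posG (vv i.succ) ∧
        σG s(ff i, vv i.castSucc) = pd ∧ σG s(ff i, vv i.succ) = pd) ∧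
    Set.ncard {x : V | (∃ i, x = vv i) ∨ (∃ i t, x = bb i t ∨ x = aa i t) ∨
        ∃ i, x = ff i} = 2 * F * (m + 1) + 2 * (m + 1) - 1 ∧
    Set.ncard {e : Sym2 V |
        (∃ i t, e = s(bb i t, aa i t)) ∨
        (∃ i, e = s(bb i tL, vv i) ∨ e = s(vv i, aa i tL)) ∨
        (∃ i : Fin F, e = s(vv i.castSucc, vv i.succ)) ∨
        e = s(bb 0 tL, aa (Fin.last F) tL) ∨
        (∃ i : Fin F, e = s(ff i, vv i.castSucc) ∨ e = s(ff i, vv i.succ))} =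
      ((m + 1) + 4) * F + (m + 1) + 2 := by
  classical
  -- basic Fin facts
  have htle : ∀ t : Fin m, t ≤ tL := by
    intro t; rw [Fin.le_def, htL]; have := t.isLt; omega
  have hbtle : ∀ i (t : Fin m), posH (bb i tL) ≤ posH (bb i t) := by
    intro i t
    rcases eq_or_lt_of_le (htle t) with h | h
    · rw [h]
    · exact (hord₁ i t tL h).le
  have hatle : ∀ i (t : Fin m), posH (aa i t) ≤ posH (aa i tL) := by
    intro i t
    rcases eq_or_lt_of_le (htle t) with h | h
    · rw [h]
    · exact (hord₂ i t tL h).le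
  have blkB : ∀ j (t : Fin m), posH (bb j tL) ≤ posH (bb j t) ∧ posH (bb j t) ≤ posH (aa j tL) :=
    fun j t => ⟨hbtle j t, ((hord₃ j t).trans (hord₄ j tL)).le⟩
  have blkV : ∀ j, posH (bb j tL) ≤ posH (vv j) ∧ posH (vv j) ≤ posH (aa j tL) :=
    fun j => ⟨(hord₃ j tL).le, (hord₄ j tL).le⟩
  have blkA : ∀ j (t : Fin m), posH (bb j tL) ≤ posH (aa j t) ∧ posH (aa j t) ≤ posH (aa j tL) :=
    fun j t => ⟨((hord₃ j tL).trans (hord₄ j t)).le, hatle j t⟩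
  have monoH : ∀ k j : Fin (F + 1), j < k → posH (aa j tL) < posH (bb k tL) := by
    intro k
    induction k using Fin.induction with
    | zero => intro j hj; exact absurd hj (by simp)
    | succ i ih =>
      intro j hj
      have hj' : j ≤ i.castSucc := by
        rw [Fin.le_def]; rw [Fin.lt_def] at hj; simp at hj ⊢; omega
      rcases eq_or_lt_of_le hj' with h | h
      · rw [h]; exact hord₅ i
      · exact ((ih j h).trans ((hord₃ i.castSucc tL).trans (hord₄ i.castSucc tL))).trans (hord₅ i)
  have sep : ∀ {j k : Fin (F + 1)} {u w : V}, j < k →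
      posH (bb j tL) ≤ posH u ∧ posH u ≤ posH (aa j tL) →
      posH (bb k tL) ≤ posH w ∧ posH w ≤ posH (aa k tL) → posH u < posH w :=
    fun h hu hw => lt_of_le_of_lt hu.2 (lt_of_lt_of_le (monoH _ _ h) hw.1)
  have cmp : ∀ {j k : Fin (F + 1)} {u w : V}, j ≠ k →
      (posH (bb j tL) ≤ posH u ∧ posH u ≤ posH (aa j tL)) →
      (posH (bb k tL) ≤ posH w ∧ posH w ≤ posH (aa k tL)) → u ≠ w := by
    intro j k u w hne hu hw
    rcases hne.lt_or_gt with h | h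
    · exact fun e => (sep h hu hw).ne (congrArg posH e)
    · exact fun e => (sep h hw hu).ne' (congrArg posH e)
  -- distinctness of gadget vertices
  have vinj : Function.Injective vv := by
    intro j k h
    by_contra hne
    exact cmp hne (blkV j) (blkV k) h
  have bne : ∀ {j k : Fin (F + 1)} {t t' : Fin m}, bb j t = bb k t' → j = k ∧ t = t' := by
    intro j k t t' h
    rcases eq_or_ne j k with rfl | hne
    · refine ⟨rfl, ?_⟩
      by_contra hne'
      rcases (show _ ≠ _ from hne').lt_or_gt with hlt | hlt
      · exact (hord₁ j t t' hlt).ne' (congrArg posH h)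
      · exact (hord₁ j t' t hlt).ne (congrArg posH h)
    · exact absurd h (cmp hne (blkB j t) (blkB k t'))
  have ane : ∀ {j k : Fin (F + 1)} {t t' : Fin m}, aa j t = aa k t' → j = k ∧ t = t' := by
    intro j k t t' h
    rcases eq_or_ne j k with rfl | hne
    · refine ⟨rfl, ?_⟩
      by_contra hne'
      rcases (show _ ≠ _ from hne').lt_or_gt with hlt | hlt
      · exact (hord₂ j t t' hlt).ne (congrArg posH h)
      · exact (hord₂ j t' t hlt).ne' (congrArg posH h)
    · exact absurd h (cmp hne (blkA j t) (blkA k t'))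
  have bvne : ∀ {j k : Fin (F + 1)} {t : Fin m}, bb j t ≠ vv k := by
    intro j k t
    rcases eq_or_ne j k with rfl | hne
    · exact fun h => (hord₃ j t).ne (congrArg posH h)
    · exact cmp hne (blkB j t) (blkV k)
  have vane : ∀ {j k : Fin (F + 1)} {t : Fin m}, vv j ≠ aa k t := by
    intro j k t
    rcases eq_or_ne j k with rfl | hne
    · exact fun h => (hord₄ j t).ne (congrArg posH h)
    · exact cmp hne (blkV j) (blkA k t)
  have bane : ∀ {j k : Fin (F + 1)} {t t' : Fin m}, bb j t ≠ aa k t' := by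
    intro j k t t'
    rcases eq_or_ne j k with rfl | hne
    · exact fun h => ((hord₃ j t).trans (hord₄ j t')).ne (congrArg posH h)
    · exact cmp hne (blkB j t) (blkA k t')
  have fne : ∀ (i : Fin F) {u : V}, u ∈ VH → ff i ≠ u := fun i u hu h => hfVH i (h ▸ hu)
  have swp : ∀ (a b : V), s(a, b) = s(b, a) := fun a b => Sym2.eq_swap
  refine ⟨?_, ?_, ?_⟩
  · -- Part 1
    intro posG σG hSL hExt i
    obtain ⟨hGinj, hGcross⟩ := hSL
    obtain ⟨hOrd, hPg⟩ := hExt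
    have lt' : ∀ {u w : V}, u ∈ VH → w ∈ VH → posH u < posH w → posG u < posG w :=
      fun hu hw h => (hOrd _ hu _ hw).mp h
    have le' : ∀ {u w : V}, u ∈ VH → w ∈ VH → posH u ≤ posH w → posG u ≤ posG w := by
      intro u w hu hw h
      by_contra hc
      exact absurd ((hOrd w hw u hu).mpr (lt_of_not_ge hc)) (not_lt.mpr h)
    have noX : ∀ (a b c d : V), s(a, c) ∈ EG → s(b, d) ∈ EG → σG s(a, c) = σG s(b, d) →
        posG a < posG b → posG b < posG c → posG c < posG d → False :=
      fun a b c d h1 h2 h3 p1 p2 p3 => hGcross _ h1 _ h2 h3 ⟨a, b, c, d, rfl, rfl, p1, p2, p3⟩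
    have σ₁ : ∀ j t, σG s(bb j t, aa j t) = q t := fun j t => (hPg _ (hedge₁ j t).1).trans (hedge₁ j t).2
    have σ₂ : ∀ j, σG s(bb j tL, vv j) = pd := fun j => (hPg _ (hedge₂ j).1).trans (hedge₂ j).2
    have σ₃ : ∀ j, σG s(vv j, aa j tL) = pd := fun j => (hPg _ (hedge₃ j).1).trans (hedge₃ j).2
    have σ₄ : ∀ j : Fin F, σG s(vv j.castSucc, vv j.succ) = pd :=
      fun j => (hPg _ (hedge₄ j).1).trans (hedge₄ j).2
    have σ₅ : σG s(bb 0 tL, aa (Fin.last F) tL) = pd := (hPg _ hedge₅.1).trans hedge₅.2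
    have e₁ : ∀ j t, s(bb j t, aa j t) ∈ EG := fun j t => hEHG (hedge₁ j t).1
    have e₂ : ∀ j, s(bb j tL, vv j) ∈ EG := fun j => hEHG (hedge₂ j).1
    have e₃ : ∀ j, s(vv j, aa j tL) ∈ EG := fun j => hEHG (hedge₃ j).1
    have e₄ : ∀ j : Fin F, s(vv j.castSucc, vv j.succ) ∈ EG := fun j => hEHG (hedge₄ j).1
    have e₅ : s(bb 0 tL, aa (Fin.last F) tL) ∈ EG := hEHG hedge₅.1
    have gBV : ∀ j (t : Fin m), posG (bb j t) < posG (vv j) :=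
      fun j t => lt' (hbVH j t) (hvVH j) (hord₃ j t)
    have gVA : ∀ j (t : Fin m), posG (vv j) < posG (aa j t) :=
      fun j t => lt' (hvVH j) (haVH j t) (hord₄ j t)
    have gVV : ∀ {j k : Fin (F + 1)}, j < k → posG (vv j) < posG (vv k) :=
      fun h => lt' (hvVH _) (hvVH _) (sep h (blkV _) (blkV _))
    have gAB : ∀ {j k : Fin (F + 1)}, j < k → posG (aa j tL) < posG (bb k tL) :=
      fun h => lt' (haVH _ _) (hbVH _ _) (monoH _ _ h)
    have gVB : ∀ {j k : Fin (F + 1)}, j < k → posG (vv j) < posG (bb k tL) :=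
      fun h => lt' (hvVH _) (hbVH _ _) (sep h (blkV _) (blkB _ _))
    have gAV : ∀ {j k : Fin (F + 1)}, j < k → posG (aa j tL) < posG (vv k) :=
      fun h => lt' (haVH _ _) (hvVH _) (sep h (blkA _ _) (blkV _))
    have hneq : ∀ u ∈ VH, posG (ff i) ≠ posG u := by
      intro u hu h
      exact hfVH i ((hGinj (Finset.mem_coe.mpr (hfVG i)) (Finset.mem_coe.mpr (hVHG hu)) h) ▸ hu)
    have eL : s(ff i, vv i.castSucc) ∈ EG := (hnew₁ i).1
    have eR : s(ff i, vv i.succ) ∈ EG := (hnew₂ i).1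
    have hcs : i.castSucc < i.succ := Fin.castSucc_lt_succ
    -- every page is pd or some q t
    have hcase : ∀ c : Fin (m + 1), c ≠ pd → ∃ t, q t = c := by
      intro c hc
      have hinj' : Function.Injective (fun t => (⟨q t, hqpd t⟩ : {c : Fin (m + 1) // c ≠ pd})) :=
        fun a b h => hq (Subtype.ext_iff.mp h)
      have hcard : Fintype.card {c : Fin (m + 1) // c ≠ pd} = m := by
        simp [Fintype.card_subtype_compl]
      have hsurj : Function.Surjective (fun t => (⟨q t, hqpd t⟩ : {c : Fin (m + 1) // c ≠ pd})) :=
        ((Fintype.bijective_iff_injective_and_card _).mpr ⟨hinj', by simp [hcard]⟩).2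
      obtain ⟨t, ht⟩ := hsurj ⟨c, hc⟩
      exact ⟨t, Subtype.ext_iff.mp ht⟩
    have suba : ∀ (j : Fin (F + 1)) (t : Fin m),
        s(ff i, vv j) ∈ EG → σG s(ff i, vv j) = q t →
        posG (bb j tL) < posG (ff i) ∧ posG (ff i) < posG (aa j tL) := by
      intro j t he hσ
      have hσ' : σG s(ff i, vv j) = σG s(bb j t, aa j t) := hσ.trans (σ₁ j t).symm
      rcases lt_trichotomy (posG (ff i)) (posG (bb j t)) with h | h | h
      · exact (noX (ff i) (bb j t) (vv j) (aa j t) he (e₁ j t) hσ' h (gBV j t) (gVA j t)).elim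
      · exact absurd h (hneq _ (hbVH j t))
      · rcases lt_trichotomy (posG (ff i)) (posG (aa j t)) with h' | h' | h'
        · exact ⟨lt_of_le_of_lt (le' (hbVH j tL) (hbVH j t) (hbtle j t)) h,
            lt_of_lt_of_le h' (le' (haVH j t) (haVH j tL) (hatle j t))⟩
        · exact absurd h' (hneq _ (haVH j t))
        · refine (noX (bb j t) (vv j) (aa j t) (ff i) (e₁ j t) ?_ ?_ (gBV j t) (gVA j t) h').elim
          · rw [swp (vv j) (ff i)]; exact he
          · rw [swp (vv j) (ff i)]; exact hσ'.symm
    have hpd : σG s(ff i, vv i.castSucc) = pd ∧ σG s(ff i, vv i.succ) = pd := by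
      have hLcase : σG s(ff i, vv i.castSucc) = pd ∨ ∃ t, σG s(ff i, vv i.castSucc) = q t := by
        rcases eq_or_ne (σG s(ff i, vv i.castSucc)) pd with h | h
        · exact Or.inl h
        · obtain ⟨t, ht⟩ := hcase _ h; exact Or.inr ⟨t, ht.symm⟩
      have hRcase : σG s(ff i, vv i.succ) = pd ∨ ∃ t, σG s(ff i, vv i.succ) = q t := by
        rcases eq_or_ne (σG s(ff i, vv i.succ)) pd with h | h
        · exact Or.inl h
        · obtain ⟨t, ht⟩ := hcase _ h; exact Or.inr ⟨t, ht.symm⟩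
      rcases hLcase with hL | ⟨t, hL⟩ <;> rcases hRcase with hR | ⟨t', hR⟩
      · exact ⟨hL, hR⟩
      · exfalso
        obtain ⟨h1, h2⟩ := suba i.succ t' eR hR
        rcases lt_trichotomy (posG (ff i)) (posG (vv i.succ)) with h | h | h
        · refine noX (vv i.castSucc) (bb i.succ tL) (ff i) (vv i.succ) ?_ (e₂ i.succ) ?_
            (gVB hcs) h1 h
          · rw [swp (vv i.castSucc) (ff i)]; exact eL
          · rw [swp (vv i.castSucc) (ff i), hL, σ₂ i.succ]
        · exact hneq _ (hvVH i.succ) h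
        · refine noX (vv i.castSucc) (vv i.succ) (ff i) (aa i.succ tL) ?_ (e₃ i.succ) ?_
            (gVV hcs) h h2
          · rw [swp (vv i.castSucc) (ff i)]; exact eL
          · rw [swp (vv i.castSucc) (ff i), hL, σ₃ i.succ]
      · exfalso
        obtain ⟨h1, h2⟩ := suba i.castSucc t eL hL
        rcases lt_trichotomy (posG (ff i)) (posG (vv i.castSucc)) with h | h | h
        · exact noX (bb i.castSucc tL) (ff i) (vv i.castSucc) (vv i.succ)
            (e₂ i.castSucc) eR ((σ₂ i.castSucc).trans hR.symm) h1 h (gVV hcs)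
        · exact hneq _ (hvVH i.castSucc) h
        · exact noX (vv i.castSucc) (ff i) (aa i.castSucc tL) (vv i.succ)
            (e₃ i.castSucc) eR ((σ₃ i.castSucc).trans hR.symm) h h2 (gAV hcs)
      · obtain ⟨_, h2⟩ := suba i.castSucc t eL hL
        obtain ⟨h3, _⟩ := suba i.succ t' eR hR
        exact absurd ((h2.trans (gAB hcs)).trans h3) (lt_irrefl _)
    obtain ⟨hpdL, hpdR⟩ := hpd
    have hv_lo : ∀ j : Fin (F + 1), posG (bb 0 tL) < posG (vv j) := by
      intro j
      rcases eq_or_ne j 0 with rfl | h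
      · exact gBV 0 tL
      · exact lt' (hbVH 0 tL) (hvVH j) (sep (Fin.pos_of_ne_zero h) (blkB 0 tL) (blkV j))
    have hv_hi : ∀ j : Fin (F + 1), posG (vv j) < posG (aa (Fin.last F) tL) := by
      intro j
      rcases eq_or_ne j (Fin.last F) with rfl | h
      · exact gVA _ tL
      · refine lt' (hvVH j) (haVH _ tL) (sep ?_ (blkV j) (blkA _ tL))
        rw [Fin.lt_def, Fin.val_last]
        have h1 := j.isLt
        have h2 : (j : ℕ) ≠ F := fun hh => h (Fin.ext (by rw [Fin.val_last]; exact hh))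
        omega
    have hx0 : posG (bb 0 tL) < posG (ff i) := by
      rcases lt_trichotomy (posG (ff i)) (posG (bb 0 tL)) with h | h | h
      · exact (noX (ff i) (bb 0 tL) (vv i.succ) (aa (Fin.last F) tL) eR e₅
          (hpdR.trans σ₅.symm) h (hv_lo i.succ) (hv_hi i.succ)).elim
      · exact absurd h (hneq _ (hbVH 0 tL))
      · exact h
    have hxN : posG (ff i) < posG (aa (Fin.last F) tL) := by
      rcases lt_trichotomy (posG (ff i)) (posG (aa (Fin.last F) tL)) with h | h | h
      · exact h
      · exact absurd h (hneq _ (haVH _ tL))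
      · refine (noX (bb 0 tL) (vv i.castSucc) (aa (Fin.last F) tL) (ff i) e₅ ?_ ?_
          (hv_lo i.castSucc) (hv_hi i.castSucc) h).elim
        · rw [swp (vv i.castSucc) (ff i)]; exact eL
        · rw [swp (vv i.castSucc) (ff i), hpdL, σ₅]
    have loc : ∀ k : Fin (F + 1), posG (ff i) < posG (aa k tL) →
        (∃ j : Fin (F + 1), (posG (bb j tL) < posG (ff i) ∧ posG (ff i) < posG (vv j)) ∨
            (posG (vv j) < posG (ff i) ∧ posG (ff i) < posG (aa j tL))) ∨
        (∃ j : Fin F, posG (aa j.castSucc tL) < posG (ff i) ∧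
            posG (ff i) < posG (bb j.succ tL)) := by
      intro k
      induction k using Fin.induction with
      | zero =>
        intro hk
        left; refine ⟨0, ?_⟩
        rcases lt_trichotomy (posG (ff i)) (posG (vv 0)) with h | h | h
        · exact Or.inl ⟨hx0, h⟩
        · exact absurd h (hneq _ (hvVH 0))
        · exact Or.inr ⟨h, hk⟩
      | succ k' ih =>
        intro hk
        rcases lt_trichotomy (posG (ff i)) (posG (aa k'.castSucc tL)) with h | h | h
        · exact ih h
        · exact absurd h (hneq _ (haVH _ tL))
        · rcases lt_trichotomy (posG (ff i)) (posG (bb k'.succ tL)) with h2 | h2 | h2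
          · exact Or.inr ⟨k', h, h2⟩
          · exact absurd h2 (hneq _ (hbVH _ tL))
          · left; refine ⟨k'.succ, ?_⟩
            rcases lt_trichotomy (posG (ff i)) (posG (vv k'.succ)) with h3 | h3 | h3
            · exact Or.inl ⟨h2, h3⟩
            · exact absurd h3 (hneq _ (hvVH _))
            · exact Or.inr ⟨h3, hk⟩
    have hkb : ∀ (j k : Fin (F + 1)), k ≠ j → posG (bb j tL) < posG (ff i) →
        posG (ff i) < posG (vv j) →
        σG s(ff i, vv k) = pd → s(ff i, vv k) ∈ EG → False := by
      intro j k hne hb hv hσk hek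
      rcases hne.lt_or_gt with h | h
      · refine noX (vv k) (bb j tL) (ff i) (vv j) ?_ (e₂ j) ?_ (gVB h) hb hv
        · rw [swp (vv k) (ff i)]; exact hek
        · rw [swp (vv k) (ff i), hσk, σ₂ j]
      · exact noX (bb j tL) (ff i) (vv j) (vv k) (e₂ j) hek ((σ₂ j).trans hσk.symm) hb hv (gVV h)
    have hka : ∀ (j k : Fin (F + 1)), k ≠ j → posG (vv j) < posG (ff i) →
        posG (ff i) < posG (aa j tL) →
        σG s(ff i, vv k) = pd → s(ff i, vv k) ∈ EG → False := by
      intro j k hne hv ha hσk hek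
      rcases hne.lt_or_gt with h | h
      · refine noX (vv k) (vv j) (ff i) (aa j tL) ?_ (e₃ j) ?_ (gVV h) hv ha
        · rw [swp (vv k) (ff i)]; exact hek
        · rw [swp (vv k) (ff i), hσk, σ₃ j]
      · exact noX (vv j) (ff i) (aa j tL) (vv k) (e₃ j) hek ((σ₃ j).trans hσk.symm) hv ha (gAV h)
    have hscne : i.succ ≠ i.castSucc := by
      intro h
      have := congrArg Fin.val h
      simp [Fin.val_succ, Fin.coe_castSucc] at this
    rcases loc (Fin.last F) hxN with ⟨j, hj | hj⟩ | ⟨j, hj1, hj2⟩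
    · exfalso
      rcases eq_or_ne i.castSucc j with rfl | hne
      · exact hkb _ i.succ hscne hj.1 hj.2 hpdR eR
      · exact hkb j i.castSucc hne hj.1 hj.2 hpdL eL
    · exfalso
      rcases eq_or_ne i.castSucc j with rfl | hne
      · exact hka _ i.succ hscne hj.1 hj.2 hpdR eR
      · exact hka j i.castSucc hne hj.1 hj.2 hpdL eL
    · rcases eq_or_ne j i with rfl | hne
      · exact ⟨(gVA j.castSucc tL).trans hj1, hj2.trans (gBV j.succ tL), hpdL, hpdR⟩
      · exfalso
        rcases hne.lt_or_gt with h | h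
        · have hsucclt : j.succ < i.succ := by
            rw [Fin.lt_def] at h ⊢; simp [Fin.val_succ]; omega
          exact noX (vv j.castSucc) (ff i) (vv j.succ) (vv i.succ) (e₄ j) eR
            ((σ₄ j).trans hpdR.symm) ((gVA j.castSucc tL).trans hj1)
            (hj2.trans (gBV j.succ tL)) (gVV hsucclt)
        · have hcastlt : i.castSucc < j.castSucc := by
            rw [Fin.lt_def] at h ⊢; simp [Fin.coe_castSucc]; omega
          refine noX (vv i.castSucc) (vv j.castSucc) (ff i) (vv j.succ) ?_ (e₄ j) ?_
            (gVV hcastlt) ((gVA j.castSucc tL).trans hj1) (hj2.trans (gBV j.succ tL))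
          · rw [swp (vv i.castSucc) (ff i)]; exact eL
          · rw [swp (vv i.castSucc) (ff i), hpdL, σ₄ j]
  · -- vertex count
    have hbinj : Function.Injective (fun p : Fin (F + 1) × Fin m => bb p.1 p.2) := by
      intro p p' h
      obtain ⟨h1, h2⟩ := bne h
      exact Prod.ext h1 h2
    have hainj : Function.Injective (fun p : Fin (F + 1) × Fin m => aa p.1 p.2) := by
      intro p p' h
      obtain ⟨h1, h2⟩ := ane h
      exact Prod.ext h1 h2
    have hset : {x : V | (∃ i, x = vv i) ∨ (∃ i t, x = bb i t ∨ x = aa i t) ∨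
        ∃ i, x = ff i} =
        ↑(((Finset.univ.image vv ∪
            Finset.univ.image (fun p : Fin (F + 1) × Fin m => bb p.1 p.2)) ∪
            Finset.univ.image (fun p : Fin (F + 1) × Fin m => aa p.1 p.2)) ∪
            Finset.univ.image ff) := by
      ext x
      simp only [Set.mem_setOf_eq, Finset.coe_union, Set.mem_union, Finset.mem_coe,
        Finset.mem_image, Finset.mem_univ, true_and, Prod.exists]
      constructor
      · rintro (⟨i, rfl⟩ | ⟨i, t, (rfl | rfl)⟩ | ⟨i, rfl⟩)
        · exact Or.inl (Or.inl (Or.inl ⟨i, rfl⟩))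
        · exact Or.inl (Or.inl (Or.inr ⟨i, t, rfl⟩))
        · exact Or.inl (Or.inr ⟨i, t, rfl⟩)
        · exact Or.inr ⟨i, rfl⟩
      · rintro (((⟨i, rfl⟩ | ⟨i, t, rfl⟩) | ⟨i, t, rfl⟩) | ⟨i, rfl⟩)
        · exact Or.inl ⟨i, rfl⟩
        · exact Or.inr (Or.inl ⟨i, t, Or.inl rfl⟩)
        · exact Or.inr (Or.inl ⟨i, t, Or.inr rfl⟩)
        · exact Or.inr (Or.inr ⟨i, rfl⟩)
    have hd1 : Disjoint (Finset.univ.image vv)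
        (Finset.univ.image (fun p : Fin (F + 1) × Fin m => bb p.1 p.2)) := by
      rw [Finset.disjoint_left]
      intro x hx hx'
      simp only [Finset.mem_image, Finset.mem_univ, true_and, Prod.exists] at hx hx'
      obtain ⟨j, rfl⟩ := hx
      obtain ⟨k, t, hk⟩ := hx'
      exact bvne hk
    have hd2 : Disjoint (Finset.univ.image vv ∪
        Finset.univ.image (fun p : Fin (F + 1) × Fin m => bb p.1 p.2))
        (Finset.univ.image (fun p : Fin (F + 1) × Fin m => aa p.1 p.2)) := by
      rw [Finset.disjoint_left]
      intro x hx hx'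
      simp only [Finset.mem_union, Finset.mem_image, Finset.mem_univ, true_and,
        Prod.exists] at hx hx'
      obtain ⟨k, t, rfl⟩ := hx'
      rcases hx with ⟨j, hj⟩ | ⟨j, t', hj⟩
      · exact vane hj
      · exact bane hj
    have hd3 : Disjoint ((Finset.univ.image vv ∪
        Finset.univ.image (fun p : Fin (F + 1) × Fin m => bb p.1 p.2)) ∪
        Finset.univ.image (fun p : Fin (F + 1) × Fin m => aa p.1 p.2))
        (Finset.univ.image ff) := by
      rw [Finset.disjoint_left]
      intro x hx hx'
      simp only [Finset.mem_union, Finset.mem_image, Finset.mem_univ, true_and,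
        Prod.exists] at hx hx'
      obtain ⟨k, rfl⟩ := hx'
      rcases hx with (⟨j, hj⟩ | ⟨j, t, hj⟩) | ⟨j, t, hj⟩
      · exact fne k (hvVH j) hj.symm
      · exact fne k (hbVH j t) hj.symm
      · exact fne k (haVH j t) hj.symm
    rw [hset, Set.ncard_coe_finset, Finset.card_union_of_disjoint hd3,
      Finset.card_union_of_disjoint hd2, Finset.card_union_of_disjoint hd1,
      Finset.card_image_of_injective _ vinj, Finset.card_image_of_injective _ hbinj,
      Finset.card_image_of_injective _ hainj, Finset.card_image_of_injective _ hfinj]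
    simp only [Finset.card_univ, Fintype.card_fin, Fintype.card_prod]
    have hge : 1 ≤ 2 * F * (m + 1) + 2 * (m + 1) := by omega
    rw [eq_comm, Nat.sub_eq_iff_eq_add hge]
    ring
  · -- edge count
    have fedge : ∀ (k : Fin F) (y u w : V), u ∈ VH → w ∈ VH → s(ff k, y) ≠ s(u, w) := by
      intro k y u w hu hw h
      rcases Sym2.eq_iff.mp h with ⟨h', _⟩ | ⟨h', _⟩
      exacts [fne k hu h', fne k hw h']
    have hlast0 : (0 : Fin (F + 1)) ≠ Fin.last F := by
      intro h
      have h' := congrArg Fin.val h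
      rw [Fin.val_last, Fin.val_zero] at h'
      omega
    have iE1 : Function.Injective
        (fun p : Fin (F + 1) × Fin m => s(bb p.1 p.2, aa p.1 p.2)) := by
      intro p p' h
      rcases Sym2.eq_iff.mp h with ⟨h1, h2⟩ | ⟨h1, _⟩
      · obtain ⟨hj, ht⟩ := bne h1
        exact Prod.ext hj ht
      · exact absurd h1 bane
    have iE2 : Function.Injective (fun j : Fin (F + 1) => s(bb j tL, vv j)) := by
      intro j k h
      rcases Sym2.eq_iff.mp h with ⟨h1, _⟩ | ⟨h1, _⟩
      · exact (bne h1).1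
      · exact absurd h1 bvne
    have iE3 : Function.Injective (fun j : Fin (F + 1) => s(vv j, aa j tL)) := by
      intro j k h
      rcases Sym2.eq_iff.mp h with ⟨h1, _⟩ | ⟨h1, _⟩
      · exact vinj h1
      · exact absurd h1 vane
    have iE4 : Function.Injective (fun j : Fin F => s(vv j.castSucc, vv j.succ)) := by
      intro j k h
      rcases Sym2.eq_iff.mp h with ⟨h1, _⟩ | ⟨h1, h2⟩
      · exact Fin.castSucc_inj.mp (vinj h1)
      · exfalso
        have e1 := congrArg Fin.val (vinj h1)
        have e2 := congrArg Fin.val (vinj h2)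
        simp [Fin.val_succ, Fin.coe_castSucc] at e1 e2
        omega
    have iE6a : Function.Injective (fun j : Fin F => s(ff j, vv j.castSucc)) := by
      intro j k h
      rcases Sym2.eq_iff.mp h with ⟨h1, _⟩ | ⟨h1, _⟩
      · exact hfinj h1
      · exact absurd h1 (fne j (hvVH _))
    have iE6b : Function.Injective (fun j : Fin F => s(ff j, vv j.succ)) := by
      intro j k h
      rcases Sym2.eq_iff.mp h with ⟨h1, _⟩ | ⟨h1, _⟩
      · exact hfinj h1
      · exact absurd h1 (fne j (hvVH _))
    have hset : {e : Sym2 V |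
        (∃ i t, e = s(bb i t, aa i t)) ∨
        (∃ i, e = s(bb i tL, vv i) ∨ e = s(vv i, aa i tL)) ∨
        (∃ i : Fin F, e = s(vv i.castSucc, vv i.succ)) ∨
        e = s(bb 0 tL, aa (Fin.last F) tL) ∨
        (∃ i : Fin F, e = s(ff i, vv i.castSucc) ∨ e = s(ff i, vv i.succ))} =
        ↑((((((Finset.univ.image
            (fun p : Fin (F + 1) × Fin m => s(bb p.1 p.2, aa p.1 p.2)) ∪
          Finset.univ.image (fun j : Fin (F + 1) => s(bb j tL, vv j))) ∪
          Finset.univ.image (fun j : Fin (F + 1) => s(vv j, aa j tL))) ∪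
          Finset.univ.image (fun j : Fin F => s(vv j.castSucc, vv j.succ))) ∪
          {s(bb 0 tL, aa (Fin.last F) tL)}) ∪
          (Finset.univ.image (fun j : Fin F => s(ff j, vv j.castSucc)) ∪
           Finset.univ.image (fun j : Fin F => s(ff j, vv j.succ))))) := by
      ext e
      simp only [Set.mem_setOf_eq, Finset.coe_union, Set.mem_union, Finset.mem_coe,
        Finset.mem_image, Finset.mem_univ, true_and, Prod.exists, Finset.coe_singleton,
        Set.mem_singleton_iff, Finset.mem_singleton]
      constructor
      · rintro (⟨i, t, rfl⟩ | ⟨i, (rfl | rfl)⟩ | ⟨i, rfl⟩ | rfl | ⟨i, (rfl | rfl)⟩)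
        · exact Or.inl (Or.inl (Or.inl (Or.inl (Or.inl ⟨i, t, rfl⟩))))
        · exact Or.inl (Or.inl (Or.inl (Or.inl (Or.inr ⟨i, rfl⟩))))
        · exact Or.inl (Or.inl (Or.inl (Or.inr ⟨i, rfl⟩)))
        · exact Or.inl (Or.inl (Or.inr ⟨i, rfl⟩))
        · exact Or.inl (Or.inr rfl)
        · exact Or.inr (Or.inl ⟨i, rfl⟩)
        · exact Or.inr (Or.inr ⟨i, rfl⟩)
      · rintro (((((⟨i, t, rfl⟩ | ⟨i, rfl⟩) | ⟨i, rfl⟩) | ⟨i, rfl⟩) | rfl) |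
          (⟨i, rfl⟩ | ⟨i, rfl⟩))
        · exact Or.inl ⟨i, t, rfl⟩
        · exact Or.inr (Or.inl ⟨i, Or.inl rfl⟩)
        · exact Or.inr (Or.inl ⟨i, Or.inr rfl⟩)
        · exact Or.inr (Or.inr (Or.inl ⟨i, rfl⟩))
        · exact Or.inr (Or.inr (Or.inr (Or.inl rfl)))
        · exact Or.inr (Or.inr (Or.inr (Or.inr ⟨i, Or.inl rfl⟩)))
        · exact Or.inr (Or.inr (Or.inr (Or.inr ⟨i, Or.inr rfl⟩)))
    have hD2 : Disjoint
        (Finset.univ.image (fun p : Fin (F + 1) × Fin m => s(bb p.1 p.2, aa p.1 p.2)))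
        (Finset.univ.image (fun j : Fin (F + 1) => s(bb j tL, vv j))) := by
      rw [Finset.disjoint_left]
      intro e he he'
      simp only [Finset.mem_image, Finset.mem_univ, true_and, Prod.exists] at he he'
      obtain ⟨k, rfl⟩ := he'
      obtain ⟨j, t, hj⟩ := he
      rcases Sym2.eq_iff.mp hj with ⟨_, h2⟩ | ⟨h1, _⟩
      · exact vane h2.symm
      · exact bvne h1
    have hD3 : Disjoint
        (Finset.univ.image (fun p : Fin (F + 1) × Fin m => s(bb p.1 p.2, aa p.1 p.2)) ∪
         Finset.univ.image (fun j : Fin (F + 1) => s(bb j tL, vv j)))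
        (Finset.univ.image (fun j : Fin (F + 1) => s(vv j, aa j tL))) := by
      rw [Finset.disjoint_left]
      intro e he he'
      simp only [Finset.mem_union, Finset.mem_image, Finset.mem_univ, true_and,
        Prod.exists] at he he'
      obtain ⟨k, rfl⟩ := he'
      rcases he with ⟨j, t, hj⟩ | ⟨j, hj⟩
      · rcases Sym2.eq_iff.mp hj with ⟨h1, _⟩ | ⟨h1, _⟩
        exacts [bvne h1, bane h1]
      · rcases Sym2.eq_iff.mp hj with ⟨h1, _⟩ | ⟨h1, _⟩
        exacts [bvne h1, bane h1]
    have hD4 : Disjoint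
        ((Finset.univ.image (fun p : Fin (F + 1) × Fin m => s(bb p.1 p.2, aa p.1 p.2)) ∪
          Finset.univ.image (fun j : Fin (F + 1) => s(bb j tL, vv j))) ∪
          Finset.univ.image (fun j : Fin (F + 1) => s(vv j, aa j tL)))
        (Finset.univ.image (fun j : Fin F => s(vv j.castSucc, vv j.succ))) := by
      rw [Finset.disjoint_left]
      intro e he he'
      simp only [Finset.mem_union, Finset.mem_image, Finset.mem_univ, true_and,
        Prod.exists] at he he'
      obtain ⟨k, rfl⟩ := he'
      rcases he with (⟨j, t, hj⟩ | ⟨j, hj⟩) | ⟨j, hj⟩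
      · rcases Sym2.eq_iff.mp hj with ⟨h1, _⟩ | ⟨h1, _⟩
        exacts [bvne h1, bvne h1]
      · rcases Sym2.eq_iff.mp hj with ⟨h1, _⟩ | ⟨h1, _⟩
        exacts [bvne h1, bvne h1]
      · rcases Sym2.eq_iff.mp hj with ⟨_, h2⟩ | ⟨_, h2⟩
        exacts [vane h2.symm, vane h2.symm]
    have hD5 : Disjoint
        (((Finset.univ.image (fun p : Fin (F + 1) × Fin m => s(bb p.1 p.2, aa p.1 p.2)) ∪
          Finset.univ.image (fun j : Fin (F + 1) => s(bb j tL, vv j))) ∪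
          Finset.univ.image (fun j : Fin (F + 1) => s(vv j, aa j tL))) ∪
          Finset.univ.image (fun j : Fin F => s(vv j.castSucc, vv j.succ)))
        {s(bb 0 tL, aa (Fin.last F) tL)} := by
      rw [Finset.disjoint_left]
      intro e he he'
      simp only [Finset.mem_union, Finset.mem_image, Finset.mem_univ, true_and,
        Prod.exists] at he
      rw [Finset.mem_singleton] at he'
      subst he'
      rcases he with ((⟨j, t, hj⟩ | ⟨j, hj⟩) | ⟨j, hj⟩) | ⟨j, hj⟩
      · rcases Sym2.eq_iff.mp hj with ⟨h1, h2⟩ | ⟨h1, _⟩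
        · exact hlast0 ((bne h1).1.symm.trans (ane h2).1)
        · exact bane h1
      · rcases Sym2.eq_iff.mp hj with ⟨_, h2⟩ | ⟨h1, _⟩
        exacts [vane h2, bane h1]
      · rcases Sym2.eq_iff.mp hj with ⟨h1, _⟩ | ⟨h1, _⟩
        exacts [bvne h1.symm, vane h1]
      · rcases Sym2.eq_iff.mp hj with ⟨h1, _⟩ | ⟨h1, _⟩
        exacts [bvne h1.symm, vane h1]
    have hD6ab : Disjoint
        (Finset.univ.image (fun j : Fin F => s(ff j, vv j.castSucc)))
        (Finset.univ.image (fun j : Fin F => s(ff j, vv j.succ))) := by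
      rw [Finset.disjoint_left]
      intro e he he'
      simp only [Finset.mem_image, Finset.mem_univ, true_and] at he he'
      obtain ⟨j, rfl⟩ := he
      obtain ⟨k, hk⟩ := he'
      rcases Sym2.eq_iff.mp hk with ⟨h1, h2⟩ | ⟨h1, _⟩
      · obtain rfl := hfinj h1
        have h' := congrArg Fin.val (vinj h2)
        rw [Fin.val_succ, Fin.coe_castSucc] at h'
        omega
      · exact fne k (hvVH _) h1
    have hD6 : Disjoint
        ((((Finset.univ.image (fun p : Fin (F + 1) × Fin m => s(bb p.1 p.2, aa p.1 p.2)) ∪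
          Finset.univ.image (fun j : Fin (F + 1) => s(bb j tL, vv j))) ∪
          Finset.univ.image (fun j : Fin (F + 1) => s(vv j, aa j tL))) ∪
          Finset.univ.image (fun j : Fin F => s(vv j.castSucc, vv j.succ))) ∪
          {s(bb 0 tL, aa (Fin.last F) tL)})
        (Finset.univ.image (fun j : Fin F => s(ff j, vv j.castSucc)) ∪
         Finset.univ.image (fun j : Fin F => s(ff j, vv j.succ))) := by
      rw [Finset.disjoint_left]
      intro e he he'
      simp only [Finset.mem_union, Finset.mem_image, Finset.mem_univ, true_and,
        Prod.exists, Finset.mem_singleton] at he he'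
      obtain ⟨k, hk⟩ | ⟨k, hk⟩ := he' <;> subst hk <;>
        rcases he with (((⟨j, t, hj⟩ | ⟨j, hj⟩) | ⟨j, hj⟩) | ⟨j, hj⟩) | hj
      · exact fedge k _ _ _ (hbVH j t) (haVH j t) hj.symm
      · exact fedge k _ _ _ (hbVH j tL) (hvVH j) hj.symm
      · exact fedge k _ _ _ (hvVH j) (haVH j tL) hj.symm
      · exact fedge k _ _ _ (hvVH _) (hvVH _) hj.symm
      · exact fedge k _ _ _ (hbVH 0 tL) (haVH _ tL) hj
      · exact fedge k _ _ _ (hbVH j t) (haVH j t) hj.symm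
      · exact fedge k _ _ _ (hbVH j tL) (hvVH j) hj.symm
      · exact fedge k _ _ _ (hvVH j) (haVH j tL) hj.symm
      · exact fedge k _ _ _ (hvVH _) (hvVH _) hj.symm
      · exact fedge k _ _ _ (hbVH 0 tL) (haVH _ tL) hj
    rw [hset, Set.ncard_coe_finset, Finset.card_union_of_disjoint hD6,
      Finset.card_union_of_disjoint hD5, Finset.card_union_of_disjoint hD4,
      Finset.card_union_of_disjoint hD3, Finset.card_union_of_disjoint hD2,
      Finset.card_union_of_disjoint hD6ab,
      Finset.card_image_of_injective _ iE1, Finset.card_image_of_injective _ iE2,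
      Finset.card_image_of_injective _ iE3, Finset.card_image_of_injective _ iE4,
      Finset.card_image_of_injective _ iE6a, Finset.card_image_of_injective _ iE6b,
      Finset.card_singleton]
    simp only [Finset.card_univ, Fintype.card_fin, Fintype.card_prod]
    ring
end

section
/- Let (V, ≺) be a finite linearly ordered set containing eight distinct elements l₁ ≺ w₁ ≺ w₂ ≺ r₁ ≺ l₂ ≺ w₃ ≺ w₄ ≺ r₂. Let P be a set of unordered pairs of elements of V consisting of the six pairs {l₁,w₁}, {w₂,r₁}, {l₂,w₃}, {w₄,r₂}, {w₁,w₄}, {w₂,w₃}, together with arbitrary further pairs {a,b} each of which satisfies one of: both a,b ⪯ l₁; both r₁ ⪯ a,b ⪯ l₂; both r₂ ⪯ a,b. Let x, y ∈ V with l₁ ≺ x ≺ r₁ and l₂ ≺ y ≺ r₂, where x and y are distinct from every element occurring in a pair of P. Then no pair of P alternates with {x,y} (i.e., for no pair {a,b} ∈ P with a ≺ b does a ≺ x ≺ b ≺ y or x ≺ a ≺ y ≺ b hold) if and only if w₁ ≺ x ≺ w₂ and w₃ ≺ y ≺ w₄. -/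
/-!
A pair `{a, b}` can only cross `{x, y}` (with `x < y`) if exactly one of `a, b` lies strictly
between `x` and `y`. When `w₁ < x < w₂` and `w₃ < y < w₄`, every pair of `P` has both or neither
of its elements in `(x, y)`. Conversely, since `x ∉ {w₁, w₂}`, a position of `x` outside `(w₁, w₂)`
makes `{x, y}` cross `{l₁, w₁}` or `{w₂, r₁}`; symmetrically for `y` with `{l₂, w₃}` and `{w₄, r₂}`.
-/

def SymAlt {V : Type*} [LinearOrder V] (e f : Sym2 V) : Prop :=
  ∃ a b c d : V, e = s(a, c) ∧ f = s(b, d) ∧ a < b ∧ b < c ∧ c < d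

open Set

lemma symAlt_mk {V : Type*} [LinearOrder V] {a b c d : V} (hab : a < b) (hbc : b < c)
    (hcd : c < d) : SymAlt s(a, c) s(b, d) :=
  ⟨a, b, c, d, rfl, rfl, hab, hbc, hcd⟩

lemma not_symAlt_mk_of_mem_Ioo_iff {V : Type*} [LinearOrder V] {a b x y : V} (hxy : x < y)
    (h : a ∈ Ioo x y ↔ b ∈ Ioo x y) :
    ¬ SymAlt s(a, b) s(x, y) ∧ ¬ SymAlt s(x, y) s(a, b) := by
  constructor
  · rintro ⟨p, q, r, t, he, hf, hpq, hqr, hrt⟩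
    rw [Sym2.eq_iff] at he hf
    rcases hf with ⟨rfl, rfl⟩ | ⟨rfl, rfl⟩
    · rcases he with ⟨rfl, rfl⟩ | ⟨rfl, rfl⟩ <;> simp only [mem_Ioo] at h <;> grind
    · order
  · rintro ⟨p, q, r, t, hf, he, hpq, hqr, hrt⟩
    rw [Sym2.eq_iff] at he hf
    rcases hf with ⟨rfl, rfl⟩ | ⟨rfl, rfl⟩
    · rcases he with ⟨rfl, rfl⟩ | ⟨rfl, rfl⟩ <;> simp only [mem_Ioo] at h <;> grind
    · order

theorem stmt8_general {V : Type*} [LinearOrder V]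
    (l₁ w₁ w₂ r₁ l₂ w₃ w₄ r₂ : V)
    (h₂ : w₁ < w₂) (h₃ : w₂ < r₁) (h₄ : r₁ < l₂)
    (h₅ : l₂ < w₃) (h₆ : w₃ < w₄)
    (P : Set (Sym2 V))
    (hm₁ : s(l₁, w₁) ∈ P) (hm₂ : s(w₂, r₁) ∈ P) (hm₃ : s(l₂, w₃) ∈ P)
    (hm₄ : s(w₄, r₂) ∈ P)
    (hP : ∀ e ∈ P, e = s(l₁, w₁) ∨ e = s(w₂, r₁) ∨ e = s(l₂, w₃) ∨ e = s(w₄, r₂) ∨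
      e = s(w₁, w₄) ∨ e = s(w₂, w₃) ∨
      ∃ a b : V, e = s(a, b) ∧
        ((a ≤ l₁ ∧ b ≤ l₁) ∨ (r₁ ≤ a ∧ a ≤ l₂ ∧ r₁ ≤ b ∧ b ≤ l₂) ∨ (r₂ ≤ a ∧ r₂ ≤ b)))
    (x y : V) (hx₁ : l₁ < x) (hx₂ : x < r₁) (hy₁ : l₂ < y) (hy₂ : y < r₂)
    (hxy : ∀ e ∈ P, ∀ z ∈ e, z ≠ x ∧ z ≠ y) :
    (∀ e ∈ P, ¬ SymAlt e s(x, y) ∧ ¬ SymAlt s(x, y) e) ↔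
      (w₁ < x ∧ x < w₂ ∧ w₃ < y ∧ y < w₄) := by
  have hx_lt_y : x < y := by order
  constructor
  · intro h
    refine ⟨(hxy _ hm₁ w₁ (by simp)).1.lt_of_le ?_, (hxy _ hm₂ w₂ (by simp)).1.symm.lt_of_le ?_,
      (hxy _ hm₃ w₃ (by simp)).2.lt_of_le ?_, (hxy _ hm₄ w₄ (by simp)).2.symm.lt_of_le ?_⟩
    · exact not_lt.1 fun hlt => (h _ hm₁).1 (symAlt_mk hx₁ hlt (by order))
    · exact not_lt.1 fun hlt => (h _ hm₂).1 (symAlt_mk hlt hx₂ (by order))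
    · exact not_lt.1 fun hlt => (h _ hm₃).2 (symAlt_mk (by order) hy₁ hlt)
    · exact not_lt.1 fun hlt => (h _ hm₄).2 (symAlt_mk (by order) hlt hy₂)
  · rintro ⟨hw₁x, hxw₂, hw₃y, hyw₄⟩ e he
    rcases hP e he with rfl | rfl | rfl | rfl | rfl | rfl | ⟨a, b, rfl, hab⟩ <;>
      refine not_symAlt_mk_of_mem_Ioo_iff hx_lt_y ?_ <;> simp only [mem_Ioo] <;> grind

/-- Tunnel configuration: with the eight distinguished elements
`l₁ ≺ w₁ ≺ w₂ ≺ r₁ ≺ l₂ ≺ w₃ ≺ w₄ ≺ r₂`, the six tunnel pairs and arbitrary further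
pairs confined to the three blocked regions, a pair `{x, y}` with `l₁ ≺ x ≺ r₁` and
`l₂ ≺ y ≺ r₂` alternates with no pair of `P` iff `w₁ ≺ x ≺ w₂` and `w₃ ≺ y ≺ w₄`. -/
theorem stmt8 {V : Type*} [LinearOrder V] [Fintype V]
    (l₁ w₁ w₂ r₁ l₂ w₃ w₄ r₂ : V)
    (h₁ : l₁ < w₁) (h₂ : w₁ < w₂) (h₃ : w₂ < r₁) (h₄ : r₁ < l₂)
    (h₅ : l₂ < w₃) (h₆ : w₃ < w₄) (h₇ : w₄ < r₂)
    (P : Set (Sym2 V))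
    (hm₁ : s(l₁, w₁) ∈ P) (hm₂ : s(w₂, r₁) ∈ P) (hm₃ : s(l₂, w₃) ∈ P)
    (hm₄ : s(w₄, r₂) ∈ P) (hm₅ : s(w₁, w₄) ∈ P) (hm₆ : s(w₂, w₃) ∈ P)
    (hP : ∀ e ∈ P, e = s(l₁, w₁) ∨ e = s(w₂, r₁) ∨ e = s(l₂, w₃) ∨ e = s(w₄, r₂) ∨
      e = s(w₁, w₄) ∨ e = s(w₂, w₃) ∨
      ∃ a b : V, e = s(a, b) ∧
        ((a ≤ l₁ ∧ b ≤ l₁) ∨ (r₁ ≤ a ∧ a ≤ l₂ ∧ r₁ ≤ b ∧ b ≤ l₂) ∨ (r₂ ≤ a ∧ r₂ ≤ b)))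
    (x y : V) (hx₁ : l₁ < x) (hx₂ : x < r₁) (hy₁ : l₂ < y) (hy₂ : y < r₂)
    (hxy : ∀ e ∈ P, ∀ z ∈ e, z ≠ x ∧ z ≠ y) :
    (∀ e ∈ P, ¬ SymAlt e s(x, y) ∧ ¬ SymAlt s(x, y) e) ↔
      (w₁ < x ∧ x < w₂ ∧ w₃ < y ∧ y < w₄) :=
  stmt8_general l₁ w₁ w₂ r₁ l₂ w₃ w₄ r₂ h₂ h₃ h₄ h₅ h₆ P hm₁ hm₂ hm₃ hm₄ hP x y hx₁ hx₂ hy₁ hy₂ hxy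
end
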